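/- arXiv:2111.09880 — 2 statements merged into one kernel-verified Lean document; each statement's English description precedes it below -/
import Mathlib

section
/- The function u(x,t) = 2νπ e^{-π²ν(t-5)} sin(πx) / (2 + e^{-π²ν(t-5)} cos(πx)) satisfies the viscous Burgers equation ∂u/∂t + u ∂u/∂x = ν ∂²u/∂x² for all x ∈ ℝ and t ∈ ℝ, for any ν > 0. -/
/-!
Write `E = exp (-π²ν(t-5))` and `φ = 2 + E cos (πx)`. Then `φ_t = ν φ_xx` and `u = -2ν φ_x / φ`
is its Cole–Hopf transform, so wherever `φ ≠ 0` the Burgers equation is a direct computation.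
For `E ≥ 2` the function `φ` has zeros. There `u = 0` by the convention `a / 0 = 0`, and both
`u_t` and `u_xx` are `0` because `t ↦ u x t` and `∂ₓu` are discontinuous there: `u φ` and
`∂ₓu φ²` tend to nonzero limits. At the zeros where also `sin (πx) = 0` (so `E = 2` and
`cos (πx) = -1`) one uses `∂ₓu (1 + cos (πx)) = 2νπ²` instead, and `t ↦ u x t` vanishes identically.
-/

open Real Filter Topology

theorem not_continuousAt_of_frequently_mul_eq {X 𝕜 : Type*} [TopologicalSpace X] [NormedField 𝕜]
    {f g h : X → 𝕜} {a : X} (hg : ContinuousAt g a) (hga : g a = 0) (hh : ContinuousAt h a)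
    (hha : h a ≠ 0) (hfgh : ∃ᶠ y in 𝓝 a, f y * g y = h y) : ¬ ContinuousAt f a := by
  intro hf
  have hlim : Tendsto (fun y => f y * g y - h y) (𝓝 a) (𝓝 (-h a)) := by
    simpa [hga] using (hf.tendsto.mul hg.tendsto).sub hh.tendsto
  obtain ⟨y, hy, hy'⟩ := (hfgh.and_eventually (hlim.eventually_ne (neg_ne_zero.mpr hha))).exists
  exact hy' (sub_eq_zero.mpr hy)

theorem deriv_eq_zero_of_not_continuousAt {𝕜 F : Type*} [NontriviallyNormedField 𝕜]
    [NormedAddCommGroup F] [NormedSpace 𝕜 F] {f : 𝕜 → F} {a : 𝕜} (h : ¬ ContinuousAt f a) :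
    deriv f a = 0 :=
  deriv_zero_of_not_differentiableAt (mt DifferentiableAt.continuousAt h)

theorem HasDerivAt.frequently_ne {𝕜 F : Type*} [NontriviallyNormedField 𝕜]
    [NormedAddCommGroup F] [NormedSpace 𝕜 F] {f : 𝕜 → F} {f' : F} {a : 𝕜}
    (hf : HasDerivAt f f' a) (hf' : f' ≠ 0) : ∃ᶠ y in 𝓝 a, f y ≠ f a :=
  (hf.eventually_ne hf').frequently.filter_mono nhdsWithin_le_nhds

theorem hasDerivAt_sin_pi_mul (x : ℝ) : HasDerivAt (fun y => sin (π * y)) (π * cos (π * x)) x := by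
  simpa [mul_comm] using ((hasDerivAt_id x).const_mul π).sin

theorem hasDerivAt_cos_pi_mul (x : ℝ) :
    HasDerivAt (fun y => cos (π * y)) (-(π * sin (π * x))) x := by
  simpa [mul_comm] using ((hasDerivAt_id x).const_mul π).cos

noncomputable def burgersProfile (ν E x : ℝ) : ℝ :=
  2 * ν * π * E * sin (π * x) / (2 + E * cos (π * x))

noncomputable def burgersProfileDeriv (ν E x : ℝ) : ℝ :=
  2 * ν * π ^ 2 * E * (2 * cos (π * x) + E) / (2 + E * cos (π * x)) ^ 2

noncomputable def burgersAmplitude (ν t : ℝ) : ℝ := exp (-π ^ 2 * ν * (t - 5))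

theorem burgersAmplitude_pos (ν t : ℝ) : 0 < burgersAmplitude ν t := exp_pos _

def SolvesBurgersAt (ν : ℝ) (u : ℝ → ℝ → ℝ) (x t : ℝ) : Prop :=
  deriv (fun t' => u x t') t + u x t * deriv (fun x' => u x' t) x =
    ν * deriv (deriv (fun x' => u x' t)) x

section Profile

variable {ν E x : ℝ}

theorem hasDerivAt_burgersProfile (hD : 2 + E * cos (π * x) ≠ 0) :
    HasDerivAt (burgersProfile ν E) (burgersProfileDeriv ν E x) x := by
  have hN := (hasDerivAt_sin_pi_mul x).const_mul (2 * ν * π * E)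
  have hD' := ((hasDerivAt_cos_pi_mul x).const_mul E).const_add 2
  refine (hN.div hD' hD).congr_deriv ?_
  rw [burgersProfileDeriv]
  field_simp
  linear_combination ν * E ^ 2 * sin_sq_add_cos_sq (π * x)

theorem hasDerivAt_burgersProfileDeriv (hD : 2 + E * cos (π * x) ≠ 0) :
    HasDerivAt (burgersProfileDeriv ν E)
      (4 * ν * π ^ 3 * E * sin (π * x) * (E * cos (π * x) - 2 + E ^ 2)
        / (2 + E * cos (π * x)) ^ 3) x := by
  have hN := (((hasDerivAt_cos_pi_mul x).const_mul 2).add_const E).const_mul (2 * ν * π ^ 2 * E)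
  have hD' := (((hasDerivAt_cos_pi_mul x).const_mul E).const_add 2).fun_pow 2
  refine (hN.div hD' (pow_ne_zero 2 hD)).congr_deriv ?_
  field_simp
  ring

theorem deriv_burgersProfile_eventuallyEq (hD : 2 + E * cos (π * x) ≠ 0) :
    deriv (burgersProfile ν E) =ᶠ[𝓝 x] burgersProfileDeriv ν E := by
  have hcont : ContinuousAt (fun y => 2 + E * cos (π * y)) x := by fun_prop
  filter_upwards [hcont.eventually_ne hD] with y hy
  exact (hasDerivAt_burgersProfile hy).deriv

theorem hasDerivAt_burgersAmplitude (ν t : ℝ) :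
    HasDerivAt (burgersAmplitude ν) (-π ^ 2 * ν * burgersAmplitude ν t) t := by
  have h := (((hasDerivAt_id t).sub_const 5).const_mul (-π ^ 2 * ν)).exp
  exact h.congr_deriv (by simp [burgersAmplitude, mul_comm])

theorem hasDerivAt_burgersProfile_time {t : ℝ}
    (hD : 2 + burgersAmplitude ν t * cos (π * x) ≠ 0) :
    HasDerivAt (fun t => burgersProfile ν (burgersAmplitude ν t) x)
      (-4 * ν ^ 2 * π ^ 3 * burgersAmplitude ν t * sin (π * x)
        / (2 + burgersAmplitude ν t * cos (π * x)) ^ 2) t := by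
  have hE := hasDerivAt_burgersAmplitude ν t
  have hN := (hE.const_mul (2 * ν * π)).mul_const (sin (π * x))
  have hD' := (hE.mul_const (cos (π * x))).const_add 2
  refine (hN.div hD' hD).congr_deriv ?_
  field_simp
  ring

theorem deriv_burgersProfile_time_eq_zero {t : ℝ} (hν : 0 < ν)
    (hD : 2 + burgersAmplitude ν t * cos (π * x) = 0) :
    deriv (fun t => burgersProfile ν (burgersAmplitude ν t) x) t = 0 := by
  by_cases hs : sin (π * x) = 0
  · simp [burgersProfile, hs]
  apply deriv_eq_zero_of_not_continuousAt
  have hc : cos (π * x) ≠ 0 := fun h => by simp [h] at hD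
  have hDt := ((hasDerivAt_burgersAmplitude ν t).mul_const (cos (π * x))).const_add 2
  refine not_continuousAt_of_frequently_mul_eq hDt.continuousAt hD
    (h := fun t => 2 * ν * π * burgersAmplitude ν t * sin (π * x))
    (by unfold burgersAmplitude; fun_prop)
    (mul_ne_zero (by have := burgersAmplitude_pos ν t; positivity) hs) ?_
  refine (hDt.frequently_ne ?_).mono fun t' ht' => ?_
  · simp [pi_ne_zero, hν.ne', (burgersAmplitude_pos ν t).ne', hc]
  rw [hD] at ht'
  exact div_mul_cancel₀ _ ht'

theorem not_continuousAt_deriv_burgersProfile_two (hν : 0 < ν) (hc : cos (π * x) = -1) :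
    ¬ ContinuousAt (deriv (burgersProfile ν 2)) x := by
  refine not_continuousAt_of_frequently_mul_eq (g := fun y => 1 + cos (π * y))
    (h := fun _ => 2 * ν * π ^ 2) (by fun_prop) (by simp [hc]) continuousAt_const
    (by positivity) ?_
  have hs : sin (π * x) = 0 := by nlinarith [sin_sq_add_cos_sq (π * x)]
  refine ((hasDerivAt_sin_pi_mul x).frequently_ne ?_).mono fun y hy => ?_
  · simp [hc, pi_ne_zero]
  have h1 : 1 + cos (π * y) ≠ 0 := fun h => hy <| by
    rw [hs]
    nlinarith [sin_sq_add_cos_sq (π * y)]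
  have h2 : 2 + 2 * cos (π * y) ≠ 0 := fun h => h1 (by linarith)
  rw [(hasDerivAt_burgersProfile h2).deriv, burgersProfileDeriv]
  field_simp
  ring

theorem not_continuousAt_deriv_burgersProfile_of_sin_ne_zero (hν : 0 < ν) (hE : 0 < E)
    (hD : 2 + E * cos (π * x) = 0) (hs : sin (π * x) ≠ 0) :
    ¬ ContinuousAt (deriv (burgersProfile ν E)) x := by
  have hk : 2 * cos (π * x) + E ≠ 0 := fun h => hs <| pow_eq_zero_iff two_ne_zero |>.mp <| by
    linear_combination sin_sq_add_cos_sq (π * x) + hD / 2 - cos (π * x) / 2 * h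
  have hDx := ((hasDerivAt_cos_pi_mul x).const_mul E).const_add 2
  refine not_continuousAt_of_frequently_mul_eq (g := fun y => (2 + E * cos (π * y)) ^ 2)
    (h := fun y => 2 * ν * π ^ 2 * E * (2 * cos (π * y) + E)) (by fun_prop) (by simp [hD])
    (by fun_prop) (mul_ne_zero (by positivity) hk) ?_
  refine (hDx.frequently_ne ?_).mono fun y hy => ?_
  · simp [hE.ne', pi_ne_zero, hs]
  rw [hD] at hy
  rw [(hasDerivAt_burgersProfile hy).deriv, burgersProfileDeriv]
  exact div_mul_cancel₀ _ (pow_ne_zero 2 hy)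

theorem deriv_deriv_burgersProfile_eq_zero (hν : 0 < ν) (hE : 0 < E)
    (hD : 2 + E * cos (π * x) = 0) : deriv (deriv (burgersProfile ν E)) x = 0 := by
  apply deriv_eq_zero_of_not_continuousAt
  by_cases hs : sin (π * x) = 0
  · have hc : cos (π * x) = -1 := by
      rcases sq_eq_one_iff.mp (by nlinarith [sin_sq_add_cos_sq (π * x)] : cos (π * x) ^ 2 = 1)
        with hc | hc
      · rw [hc] at hD; linarith
      · exact hc
    obtain rfl : E = 2 := by rw [hc] at hD; linarith
    exact not_continuousAt_deriv_burgersProfile_two hν hc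
  · exact not_continuousAt_deriv_burgersProfile_of_sin_ne_zero hν hE hD hs

theorem solvesBurgersAt_of_ne_zero {t : ℝ} (hD : 2 + burgersAmplitude ν t * cos (π * x) ≠ 0) :
    SolvesBurgersAt ν (fun x t => burgersProfile ν (burgersAmplitude ν t) x) x t := by
  rw [SolvesBurgersAt, (hasDerivAt_burgersProfile_time hD).deriv,
    (hasDerivAt_burgersProfile hD).deriv, (deriv_burgersProfile_eventuallyEq hD).deriv_eq,
    (hasDerivAt_burgersProfileDeriv hD).deriv, burgersProfile, burgersProfileDeriv]
  field_simp
  ring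

theorem solvesBurgersAt_of_eq_zero {t : ℝ} (hν : 0 < ν)
    (hD : 2 + burgersAmplitude ν t * cos (π * x) = 0) :
    SolvesBurgersAt ν (fun x t => burgersProfile ν (burgersAmplitude ν t) x) x t := by
  rw [SolvesBurgersAt, deriv_burgersProfile_time_eq_zero hν hD,
    deriv_deriv_burgersProfile_eq_zero hν (burgersAmplitude_pos ν t) hD, burgersProfile, hD,
    div_zero]
  ring

end Profile

theorem burgers_analytical_solution (ν : ℝ) (hν : 0 < ν)
    (u : ℝ → ℝ → ℝ)
    (hu : ∀ x t : ℝ, u x t =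
      (2 * ν * π * Real.exp (-π ^ 2 * ν * (t - 5)) * Real.sin (π * x)) /
        (2 + Real.exp (-π ^ 2 * ν * (t - 5)) * Real.cos (π * x))) :
    ∀ x t : ℝ,
      deriv (fun t' => u x t') t + u x t * deriv (fun x' => u x' t) x =
        ν * deriv (deriv (fun x' => u x' t)) x := by
  obtain rfl : u = fun x t => burgersProfile ν (burgersAmplitude ν t) x :=
    funext fun x => funext fun t => hu x t
  intro x t
  by_cases hD : 2 + burgersAmplitude ν t * cos (π * x) = 0
  · exact solvesBurgersAt_of_eq_zero hν hD
  · exact solvesBurgersAt_of_ne_zero hD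
end

section
/- The function u*(x,y) from the Laplace optimal control problem achieves the desired flux at the top wall: ∂u*/∂y(x,1) = (1/2) cos(2πx)·sech(2π)·(e^{2π}+e^{-2π}) = cos(2πx) for all x, hence the cost J = ∫₀¹ |∂u*/∂y(x,1) − cos(2πx)|² dx equals 0 when the target flux is q_d(x) = cos(2πx). -/
open Real

theorem laplace_optimal_state_flux
    (ustar : ℝ → ℝ → ℝ)
    (h : ∀ x y : ℝ, ustar x y =
      (1 / 2) * (1 / Real.cosh (2 * π)) * Real.sin (2 * π * x) *
        (Real.exp (2 * π * (y - 1)) + Real.exp (2 * π * (1 - y))) +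
      (1 / (4 * π)) * (1 / Real.cosh (2 * π)) * Real.cos (2 * π * x) *
        (Real.exp (2 * π * y) - Real.exp (-(2 * π * y)))) :
    (∀ x : ℝ, deriv (fun y => ustar x y) 1 = Real.cos (2 * π * x)) ∧
    (∫ x in (0:ℝ)..1, |deriv (fun y => ustar x y) 1 - Real.cos (2 * π * x)| ^ 2) = 0 := by
  have key : ∀ x : ℝ, deriv (fun y => ustar x y) 1 = Real.cos (2 * π * x) := by
    intro x
    have hfun : (fun y => ustar x y) = fun y =>
      (1 / 2) * (1 / Real.cosh (2 * π)) * Real.sin (2 * π * x) *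
        (Real.exp (2 * π * (y - 1)) + Real.exp (2 * π * (1 - y))) +
      (1 / (4 * π)) * (1 / Real.cosh (2 * π)) * Real.cos (2 * π * x) *
        (Real.exp (2 * π * y) - Real.exp (-(2 * π * y))) := funext (h x)
    rw [hfun]
    have h1 : HasDerivAt (fun y : ℝ => Real.exp (2 * π * (y - 1))) (2 * π * Real.exp (2 * π * (1 - 1))) 1 := by
      have := ((((hasDerivAt_id (1:ℝ)).sub_const 1).const_mul (2 * π))).exp
      simpa [mul_comm] using this
    have h2 : HasDerivAt (fun y : ℝ => Real.exp (2 * π * (1 - y))) (-(2 * π) * Real.exp (2 * π * (1 - 1))) 1 := by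
      have := ((((hasDerivAt_id (1:ℝ)).const_sub 1).const_mul (2 * π))).exp
      simpa [mul_comm, mul_assoc, mul_left_comm] using this
    have h3 : HasDerivAt (fun y : ℝ => Real.exp (2 * π * y)) (2 * π * Real.exp (2 * π * 1)) 1 := by
      have := (((hasDerivAt_id (1:ℝ)).const_mul (2 * π))).exp
      simpa [mul_comm] using this
    have h4 : HasDerivAt (fun y : ℝ => Real.exp (-(2 * π * y))) (-(2 * π) * Real.exp (-(2 * π * 1))) 1 := by
      have := ((((hasDerivAt_id (1:ℝ)).const_mul (2 * π)).neg)).exp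
      simpa [mul_comm, mul_assoc, mul_left_comm] using this
    have hD : HasDerivAt (fun y =>
      (1 / 2) * (1 / Real.cosh (2 * π)) * Real.sin (2 * π * x) *
        (Real.exp (2 * π * (y - 1)) + Real.exp (2 * π * (1 - y))) +
      (1 / (4 * π)) * (1 / Real.cosh (2 * π)) * Real.cos (2 * π * x) *
        (Real.exp (2 * π * y) - Real.exp (-(2 * π * y))))
      ((1 / 2) * (1 / Real.cosh (2 * π)) * Real.sin (2 * π * x) *
        (2 * π * Real.exp (2 * π * (1 - 1)) + -(2 * π) * Real.exp (2 * π * (1 - 1))) +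
       (1 / (4 * π)) * (1 / Real.cosh (2 * π)) * Real.cos (2 * π * x) *
        (2 * π * Real.exp (2 * π * 1) - -(2 * π) * Real.exp (-(2 * π * 1)))) 1 :=
      (((h1.add h2).const_mul _).add (((h3.sub h4)).const_mul _))
    rw [hD.deriv]
    have hπ : (π : ℝ) ≠ 0 := Real.pi_ne_zero
    have hcosh : Real.cosh (2 * π) = (Real.exp (2 * π) + Real.exp (-(2 * π))) / 2 := by
      rw [Real.cosh_eq]
    have hc : Real.cosh (2 * π) ≠ 0 := (Real.cosh_pos _).ne'
    rw [hcosh] at *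
    field_simp
    ring
  refine ⟨key, ?_⟩
  have : ∀ x : ℝ, |deriv (fun y => ustar x y) 1 - Real.cos (2 * π * x)| ^ 2 = 0 := by
    intro x; rw [key x]; simp
  simp only [this]
  simp
end
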